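/- Let 0 < p < 1, κ > 0, k > 0, and set m = min{κ, k}. The function V(x) = (m^p/(p(κ(1-p)+mp)))·x^p satisfies, for all x > 0, the equation β V(x) + (μ²/(2σ²))·V'(x)²/V''(x) + (m x - r x)V'(x) - (m x)^p/p = 0, where β, r, μ, σ > 0 are such that κ = (β - p(μ²/(2σ²(1-p)) + r))/(1-p). -/

import Mathlib

/-!
For a power function `V = C x^p` each term of the equation is a constant multiple of `x^p`,
so the equation reduces to a linear relation between `β`, `μ²/(2σ²)`, `r`, `m` and the
normalising constant `κ(1-p) + mp`; the choice of `κ` is exactly what makes that relation hold,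
for every value of `m`.
-/

open Real

lemma rpow_hjb_residual_eq (β A r : ℝ) {c x p D : ℝ} (hc : 0 < c) (hx : 0 < x)
    (hp0 : p ≠ 0) (hp1 : p ≠ 1) (hD : D ≠ 0) :
    β * (c ^ p * x ^ p / (p * D))
        + A * (c ^ p * x ^ (p - 1) / D) ^ 2 / ((p - 1) * c ^ p * x ^ (p - 2) / D)
        + (c * x - r * x) * (c ^ p * x ^ (p - 1) / D)
        - (c * x) ^ p / p
      = (c * x) ^ p / (p * D) * (β + A * p / (p - 1) + p * (c - r) - D) := by
  have hxp : x ^ p ≠ 0 := (rpow_pos_of_pos hx p).ne'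
  have hcp : c ^ p ≠ 0 := (rpow_pos_of_pos hc p).ne'
  have hp1' : p - 1 ≠ 0 := sub_ne_zero.mpr hp1
  rw [rpow_sub hx, rpow_sub hx, rpow_one, rpow_two, mul_rpow hc.le hx.le]
  field_simp

theorem stmt6_general (β r μ σ p k θ κ m : ℝ)
    (hp0 : 0 < p) (hp1 : p < 1) (hk : 0 < k)
    (hθ : θ = μ ^ 2 / (2 * σ ^ 2 * (1 - p)))
    (hκ : κ = (β - p * (θ + r)) / (1 - p))
    (hκpos : 0 < κ)
    (hm : m = min κ k) :
    ∀ x : ℝ, 0 < x →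
      β * (m ^ p * x ^ p / (p * (κ * (1 - p) + m * p)))
        + μ ^ 2 / (2 * σ ^ 2) *
            (m ^ p * x ^ (p - 1) / (κ * (1 - p) + m * p)) ^ 2 /
            ((p - 1) * m ^ p * x ^ (p - 2) / (κ * (1 - p) + m * p))
        + (m * x - r * x) * (m ^ p * x ^ (p - 1) / (κ * (1 - p) + m * p))
        - (m * x) ^ p / p = 0 := by
  intro x hx
  have h1p : (0 : ℝ) < 1 - p := sub_pos.mpr hp1
  have hm0 : 0 < m := hm ▸ lt_min hκpos hk
  have hD : 0 < κ * (1 - p) + m * p := by positivity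
  have hA : μ ^ 2 / (2 * σ ^ 2) = θ * (1 - p) := by
    rw [hθ, ← div_div (μ ^ 2) (2 * σ ^ 2), div_mul_cancel₀ _ h1p.ne']
  have hκ' : κ * (1 - p) = β - p * (θ + r) := by
    rw [hκ, div_mul_cancel₀ _ h1p.ne']
  rw [rpow_hjb_residual_eq β _ r hm0 hx hp0.ne' hp1.ne hD.ne', hA, hκ']
  have hp1' : p - 1 ≠ 0 := sub_ne_zero.mpr hp1.ne
  have hcoeff : β + θ * (1 - p) * p / (p - 1) + p * (m - r) - (β - p * (θ + r) + m * p) = 0 := by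
    field_simp
    ring
  rw [hcoeff, mul_zero]

/-- The value function `V(x) = m^p x^p/(p(κ(1-p)+mp))`, with `m = min{κ,k}`, satisfies
the HJB-type equation
`β V(x) + (μ²/(2σ²)) V'(x)²/V''(x) + (mx - rx) V'(x) - (mx)^p/p = 0` for all `x > 0`,
where `V'` and `V''` are given by their explicit formulas. -/
theorem stmt6 (β r μ σ p k θ κ m : ℝ)
    (hβ : 0 < β) (hr : 0 < r) (hμ : 0 < μ) (hσ : 0 < σ)
    (hp0 : 0 < p) (hp1 : p < 1) (hk : 0 < k)
    (hθ : θ = μ ^ 2 / (2 * σ ^ 2 * (1 - p)))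
    (hκ : κ = (β - p * (θ + r)) / (1 - p))
    (hκpos : 0 < κ)
    (hm : m = min κ k) :
    ∀ x : ℝ, 0 < x →
      β * (m ^ p * x ^ p / (p * (κ * (1 - p) + m * p)))
        + μ ^ 2 / (2 * σ ^ 2) *
            (m ^ p * x ^ (p - 1) / (κ * (1 - p) + m * p)) ^ 2 /
            ((p - 1) * m ^ p * x ^ (p - 2) / (κ * (1 - p) + m * p))
        + (m * x - r * x) * (m ^ p * x ^ (p - 1) / (κ * (1 - p) + m * p))
        - (m * x) ^ p / p = 0 :=
  stmt6_general β r μ σ p k θ κ m hp0 hp1 hk hθ hκ hκpos hm
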